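/- The graceful chromatic number of the complete graph K_14 is 36; a graceful 36-coloring is given by assigning the fourteen vertices the colors 1, 2, 4, 8, 9, 13, 21, 23, 26, 27, 30, 32, 35, 36. -/

import Mathlib

/-- The induced edge coloring `g*(ab) = |g a - g b|` is proper: any two edges sharing a
vertex receive distinct values. -/
def GracefulEdgeProper {V : Type*} (G : SimpleGraph V) (g : V → ℕ) : Prop :=
  ∀ a b c : V, G.Adj a b → G.Adj a c → b ≠ c →
    Nat.dist (g a) (g b) ≠ Nat.dist (g a) (g c)

/-- A graceful coloring: a proper vertex coloring by positive integers whose induced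
edge coloring is proper. -/
def IsGracefulColoring {V : Type*} (G : SimpleGraph V) (g : V → ℕ) : Prop :=
  (∀ v, 1 ≤ g v) ∧ (∀ a b : V, G.Adj a b → g a ≠ g b) ∧ GracefulEdgeProper G g

/-- A graceful `l`-coloring: a proper vertex coloring with colors in `{1, …, l}` whose
induced edge coloring is proper. -/
def IsGracefulLColoring {V : Type*} (G : SimpleGraph V) (l : ℕ) (g : V → ℕ) : Prop :=
  (∀ v, g v ∈ Finset.Icc 1 l) ∧ (∀ a b : V, G.Adj a b → g a ≠ g b) ∧ GracefulEdgeProper G g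

/-- The graceful chromatic number: the least `l ≥ 2` admitting a graceful `l`-coloring. -/
noncomputable def gracefulChromaticNumber {V : Type*} (G : SimpleGraph V) : ℕ :=
  sInf {l | 2 ≤ l ∧ ∃ g : V → ℕ, IsGracefulLColoring G l g}

/-- A finite set of naturals is 3-AP-free: no three distinct elements `a, b, c`
with `b - a = c - b`. -/
def ThreeAPFreeSet (S : Finset ℕ) : Prop :=
  ∀ a ∈ S, ∀ b ∈ S, ∀ c ∈ S, a ≠ b → b ≠ c → a ≠ c → (b : ℤ) - (a : ℤ) ≠ (c : ℤ) - (b : ℤ)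

/-!
In a graceful coloring of `K_n` the colors are distinct, and no color `c` is the midpoint
`a + b = 2c` of two others, since then the two edges at the vertex colored `c` would both get
the label `|c - a| = |c - b|`. So the colors form a 3AP-free subset of `{1, …, l}` and `n` is at
most the Roth number `r₃(l)`. The fourteen listed colors are 3AP-free, while `r₃(35) ≤ 13` is
certified by a branch-and-bound search that prunes with the bounds on `r₃(m)`, `m < 35`, each
certified by the same search before it is used.
-/

open Finset

section Graceful

variable {V : Type*} {l : ℕ} {g : V → ℕ}

theorem IsGracefulLColoring.injective_of_top (hg : IsGracefulLColoring (⊤ : SimpleGraph V) l g) :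
    Function.Injective g :=
  fun u v huv => by_contra fun hne => hg.2.1 u v ((SimpleGraph.top_adj u v).2 hne) huv

theorem GracefulEdgeProper.threeAPFree_range (hg : GracefulEdgeProper (⊤ : SimpleGraph V) g) :
    ThreeAPFree (Set.range g) := by
  rintro _ ⟨u, rfl⟩ _ ⟨v, rfl⟩ _ ⟨w, rfl⟩ h
  by_contra huv
  have hvu : v ≠ u := by rintro rfl; exact huv rfl
  have hvw : v ≠ w := by rintro rfl; omega
  have huw : u ≠ w := by rintro rfl; omega
  exact hg v u w ((SimpleGraph.top_adj v u).2 hvu) ((SimpleGraph.top_adj v w).2 hvw) huw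
    (by simp only [Nat.dist]; omega)

theorem IsGracefulLColoring.card_le_rothNumberNat [Fintype V]
    (hg : IsGracefulLColoring (⊤ : SimpleGraph V) l g) : Fintype.card V ≤ rothNumberNat l := by
  have hAP : ThreeAPFree ((univ.image g : Finset ℕ) : Set ℕ) := by
    simpa only [coe_image, coe_univ, Set.image_univ] using hg.2.2.threeAPFree_range
  have hsub : univ.image g ⊆ Ico 1 (l + 1) := by
    intro c hc
    obtain ⟨v, -, rfl⟩ := mem_image.1 hc
    have := mem_Icc.1 (hg.1 v)
    exact mem_Ico.2 ⟨this.1, by omega⟩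
  calc Fintype.card V = #(univ.image g) := (card_image_of_injective _ hg.injective_of_top).symm
    _ ≤ addRothNumber (Ico 1 (l + 1)) := hAP.le_addRothNumber hsub
    _ = rothNumberNat l := by rw [addRothNumber_Ico, Nat.add_sub_cancel]

theorem gracefulChromaticNumber_top_eq [Fintype V] (hl : 2 ≤ l)
    (hg : IsGracefulLColoring (⊤ : SimpleGraph V) l g)
    (hroth : rothNumberNat (l - 1) < Fintype.card V) :
    gracefulChromaticNumber (⊤ : SimpleGraph V) = l := by
  refine le_antisymm (Nat.sInf_le ⟨hl, g, hg⟩) (le_csInf ⟨l, hl, g, hg⟩ ?_)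
  rintro m ⟨-, g', hg'⟩
  by_contra! hm
  have := rothNumberNat.mono (Nat.le_sub_one_of_lt hm)
  have := hg'.card_le_rothNumberNat
  omega

end Graceful

def RothBounds : List ℕ → Prop
  | [] => True
  | b :: L => rothNumberNat L.length ≤ b ∧ RothBounds L

def forbiddenBy (x : ℕ) (s : List ℕ) : ℕ :=
  s.foldr (fun a F => F ||| 2 ^ (x + x) >>> a) 0

theorem testBit_forbiddenBy {x y : ℕ} {s : List ℕ} :
    (forbiddenBy x s).testBit y = true ↔ ∃ a ∈ s, a + y = x + x := by
  induction s with
  | nil => simp [forbiddenBy]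
  | cons a s ih =>
    rw [forbiddenBy, List.foldr_cons, Nat.testBit_or, Bool.or_eq_true, ← forbiddenBy, ih,
      Nat.testBit_shiftRight, Nat.testBit_two_pow, decide_eq_true_iff]
    simp only [List.mem_cons, exists_eq_or_imp]
    rw [eq_comm, or_comm]

/-- Decides the positions `p - 1, p - 2, …` in turn, keeping the chosen elements in `s` and the
positions they exclude as the bits of `F`. The chosen elements exceed every position still to be
decided, so choosing `x` only excludes the `y` with `a + y = 2x` for some `a ∈ s`; the head of `L`
bounds how many elements can still be taken below `x`. -/
def threeAPFreeSearch : List ℕ → ℕ → ℕ → List ℕ → ℕ → Bool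
  | [], _, k, _, _ => k == 0
  | b :: L, p, k, s, F =>
    let x := p - 1
    k == 0 ||
      (!F.testBit x && decide (k ≤ b + 1) &&
        threeAPFreeSearch L x (k - 1) (x :: s) (F ||| forbiddenBy x s)) ||
      (decide (k ≤ b) && threeAPFreeSearch L x k s F)

theorem threeAPFreeSearch_eq_true {A : Set ℕ} (hA : ThreeAPFree A) {L : List ℕ}
    (hL : RothBounds L) {p k : ℕ} (hp : L.length = p) {s : List ℕ} (hsA : ∀ a ∈ s, a ∈ A)
    {F : ℕ} {T : Finset ℕ} (hTA : ↑T ⊆ A) (hT : ∀ y ∈ T, y < p ∧ F.testBit y = false)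
    (hk : k ≤ #T) : threeAPFreeSearch L p k s F = true := by
  induction L generalizing p k s F T with
  | nil =>
    rw [List.length_nil] at hp
    subst hp
    have : T = ∅ := eq_empty_of_forall_notMem fun y hy => by have := (hT y hy).1; omega
    simp_all [threeAPFreeSearch]
  | cons b L ih =>
    rw [List.length_cons] at hp
    subst hp
    set x := L.length
    have hbound : ∀ U : Finset ℕ, ↑U ⊆ A → (∀ y ∈ U, y < x) → #U ≤ b := fun U hUA hU =>
      (ThreeAPFree.le_rothNumberNat U (hA.mono hUA) hU rfl).trans hL.1
    simp only [threeAPFreeSearch, Nat.add_sub_cancel, Bool.or_eq_true,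
      Bool.and_eq_true, Bool.not_eq_true', decide_eq_true_eq, beq_iff_eq]
    by_cases hxT : x ∈ T
    · have hcard := card_erase_add_one hxT
      have hT' : ∀ y ∈ T.erase x, y < x ∧ (F ||| forbiddenBy x s).testBit y = false := by
        intro y hy
        obtain ⟨hyx, hyT⟩ := mem_erase.1 hy
        obtain ⟨hy, hFy⟩ := hT y hyT
        refine ⟨by omega, ?_⟩
        rw [Nat.testBit_or, hFy, Bool.false_or, Bool.eq_false_iff, ne_eq, testBit_forbiddenBy]
        rintro ⟨a, ha, hay⟩
        obtain rfl := hA (hsA a ha) (hTA hxT) (hTA hyT) hay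
        omega
      have hsA' : ∀ a ∈ x :: s, a ∈ A := List.forall_mem_cons.2 ⟨hTA hxT, hsA⟩
      have hT'A : ↑(T.erase x) ⊆ A := (coe_subset.2 (erase_subset x T)).trans hTA
      have := hbound _ hT'A fun y hy => (hT' y hy).1
      exact Or.inl (Or.inr ⟨⟨(hT x hxT).2, by omega⟩, ih hL.2 rfl hsA' hT'A hT' (by omega)⟩)
    · have hTx : ∀ y ∈ T, y < x ∧ F.testBit y = false := fun y hy =>
        ⟨lt_of_le_of_ne (Nat.lt_succ_iff.1 (hT y hy).1) (ne_of_mem_of_not_mem hy hxT),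
          (hT y hy).2⟩
      exact Or.inr ⟨hk.trans (hbound T hTA fun y hy => (hTx y hy).1),
        ih hL.2 rfl hsA hTA hTx hk⟩

def checkRothBounds : List ℕ → Bool
  | [] => true
  | b :: L => !threeAPFreeSearch L L.length (b + 1) [] 0 && checkRothBounds L

theorem rothBounds_of_checkRothBounds {L : List ℕ} (h : checkRothBounds L = true) :
    RothBounds L := by
  induction L with
  | nil => trivial
  | cons b L ih =>
    simp only [checkRothBounds, Bool.and_eq_true, Bool.not_eq_true'] at h
    refine ⟨?_, ih h.2⟩
    by_contra! hb
    obtain ⟨t, ht, hcard, htAP⟩ := rothNumberNat_spec L.length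
    have := threeAPFreeSearch_eq_true htAP (ih h.2) rfl (k := b + 1) (s := []) (by simp) subset_rfl
      (fun y hy => ⟨mem_range.1 (ht hy), Nat.zero_testBit y⟩) (by omega)
    simp_all

-- The values of `rothNumberNat n` for `n = 35, 34, …, 0`.
theorem rothNumberNat_thirtyFive_le : rothNumberNat 35 ≤ 13 :=
  (rothBounds_of_checkRothBounds (L := [13, 13, 13, 13, 12, 12, 11, 11, 11, 11, 11, 11, 10, 10, 10,
    10, 9, 9, 8, 8, 8, 8, 7, 6, 6, 5, 5, 4, 4, 4, 4, 3, 2, 2, 1, 0]) (by decide +kernel)).1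

theorem gracefulChromatic_K14 :
    gracefulChromaticNumber (⊤ : SimpleGraph (Fin 14)) = 36 ∧
      IsGracefulLColoring (⊤ : SimpleGraph (Fin 14)) 36 ![1, 2, 4, 8, 9, 13, 21, 23, 26, 27, 30, 32, 35, 36] := by
  have hcol : IsGracefulLColoring (⊤ : SimpleGraph (Fin 14)) 36
      ![1, 2, 4, 8, 9, 13, 21, 23, 26, 27, 30, 32, 35, 36] :=
    ⟨by decide, by decide, by unfold GracefulEdgeProper; decide⟩
  have hroth : rothNumberNat (36 - 1) < Fintype.card (Fin 14) := by
    rw [Fintype.card_fin]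
    exact Nat.lt_succ_of_le rothNumberNat_thirtyFive_le
  exact ⟨gracefulChromaticNumber_top_eq (by norm_num) hcol hroth, hcol⟩
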